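/- Let b + 2 ≤ a ≤ 2b (so a > b > a - b - 1 ≥ 1). Then the values of the irreducible characters of S_{2a} indexed by (a, b+2, 1^{a-b-2}) and by (a, a-b+1, 1^{b-1}) at the conjugacy class of cycle type (a, b, a-b-1, 1) both equal 0. -/

import Mathlib

/-- The beta-set (set of first-column hook lengths) of a partition given as a
weakly decreasing list of parts. -/
def betaSet (l : List ℕ) : List ℕ :=
  (l.zipIdx.map Prod.swap).map (fun p => p.2 + (l.length - 1 - p.1))

/-- Recover a partition (weakly decreasing list of positive parts) from a
list of distinct beta-numbers. -/
def fromBeta (b : List ℕ) : List ℕ :=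
  let s := List.insertionSort (· ≥ ·) b
  ((s.zipIdx.map Prod.swap).map (fun p => p.2 - (s.length - 1 - p.1))).filter (fun x => x ≠ 0)

/-- `MN β γ` is the value of the irreducible character of the symmetric group
indexed by the partition `β` at the conjugacy class of cycle type `γ`,
computed via the Murnaghan–Nakayama rule (phrased in terms of beta-numbers:
removing a rim hook of length `q` replaces a beta-number `x` by `x - q`,
the sign being `(-1)` to the number of beta-numbers strictly between
`x - q` and `x`, i.e. the leg length of the hook). -/
def MN : List ℕ → List ℕ → ℤ
  | β, [] => if β = [] then 1 else 0
  | β, q :: γ =>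
      ((betaSet β).map (fun x =>
        if q ≤ x ∧ x - q ∉ betaSet β then
          (-1) ^ ((betaSet β).filter (fun y => x - q < y ∧ y < x)).length *
            MN (fromBeta ((x - q) :: (betaSet β).erase x)) γ
        else 0)).sum

/-- `l` is a partition of `m`: a weakly decreasing list of positive parts
summing to `m`. -/
def IsPartition (l : List ℕ) (m : ℕ) : Prop :=
  l.Pairwise (· ≥ ·) ∧ (∀ i ∈ l, 0 < i) ∧ l.sum = m

/-- The conjugate (transpose) partition: `(conjugate l)_i = #{j : l_j > i}`. -/
def conjugate (l : List ℕ) : List ℕ :=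
  (List.range (l.foldr max 0)).map (fun i => (l.filter (fun p => i < p)).length)

/-!
Both partitions have the shape `(y + k, y, 1^k)` with `y + k = a`, whose beta-set is
`{y + 2k + 1, y + k, k, …, 1}`. An `a`-rim hook can be removed in exactly two ways: from the
largest beta-number, with sign `-1`, leaving the hook `(y - 1, 1^(k+1))`, or from the second one,
with sign `(-1)^k`, leaving the row `(a)`. The row has character value `1`, and the hook admits a
single rim-hook path along the cycles `(b, a - b - 1, 1)`, of total sign `(-1)^k`; so the two
contributions cancel.
-/

theorem map_zipIdx_revIdx_cons (h : ℕ → ℕ → ℕ) (x : ℕ) (xs : List ℕ) :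
    (((x :: xs).zipIdx.map Prod.swap).map fun p => h p.2 ((x :: xs).length - 1 - p.1)) =
      h x xs.length :: (xs.zipIdx.map Prod.swap).map fun p => h p.2 (xs.length - 1 - p.1) := by
  simp only [List.zipIdx_cons', List.map_cons, List.map_map, List.length_cons]
  congr 1
  refine List.map_congr_left fun p _ => ?_
  simp only [Function.comp_apply, Prod.map, Prod.snd_swap, Prod.fst_swap, id]
  congr 1; omega

theorem betaSet_nil : betaSet [] = [] := rfl

theorem betaSet_cons (x : ℕ) (xs : List ℕ) :
    betaSet (x :: xs) = (x + xs.length) :: betaSet xs :=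
  map_zipIdx_revIdx_cons (· + ·) x xs

theorem length_betaSet (l : List ℕ) : (betaSet l).length = l.length := by
  simp [betaSet]

theorem mem_betaSet_replicate {k c z : ℕ} :
    z ∈ betaSet (List.replicate k c) ↔ c ≤ z ∧ z < c + k := by
  induction k with
  | zero => simp [betaSet_nil]
  | succ k ih =>
    simp only [List.replicate_succ, betaSet_cons, List.mem_cons, ih, List.length_replicate]
    omega

theorem lt_of_mem_betaSet {l : List ℕ} {x z : ℕ} (hl : ∀ y ∈ l, y ≤ x) (hz : z ∈ betaSet l) :
    z < x + l.length := by
  induction l with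
  | nil => simp [betaSet_nil] at hz
  | cons y l ih =>
    rw [betaSet_cons, List.mem_cons] at hz
    simp only [List.mem_cons, forall_eq_or_imp] at hl
    simp only [List.length_cons]
    rcases hz with rfl | hz
    · omega
    · have := ih hl.2 hz; omega

theorem pairwise_gt_betaSet {l : List ℕ} (hl : l.Pairwise (· ≥ ·)) :
    (betaSet l).Pairwise (· > ·) := by
  induction l with
  | nil => simp [betaSet_nil]
  | cons x l ih =>
    rw [List.pairwise_cons] at hl
    rw [betaSet_cons, List.pairwise_cons]
    exact ⟨fun z hz => lt_of_mem_betaSet hl.1 hz, ih hl.2⟩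

theorem map_zipIdx_sub_revIdx_betaSet (l : List ℕ) :
    (((betaSet l).zipIdx.map Prod.swap).map fun p => p.2 - ((betaSet l).length - 1 - p.1)) = l := by
  induction l with
  | nil => rfl
  | cons x l ih =>
    rw [betaSet_cons, map_zipIdx_revIdx_cons (· - ·), ih, length_betaSet, Nat.add_sub_cancel]

theorem fromBeta_of_perm {l μ : List ℕ} (hμ : μ.Pairwise (· ≥ ·)) (hl : l.Perm (betaSet μ)) :
    fromBeta l = μ.filter (· ≠ 0) := by
  have hsort : l.insertionSort (· ≥ ·) = betaSet μ :=
    List.Perm.eq_of_pairwise (fun a b _ _ h1 h2 => le_antisymm h2 h1)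
      (List.pairwise_insertionSort _ l)
      ((pairwise_gt_betaSet hμ).imp le_of_lt) ((List.perm_insertionSort _ l).trans hl)
  simp only [fromBeta, hsort, map_zipIdx_sub_revIdx_betaSet]

theorem fromBeta_of_subset {l μ : List ℕ} (hμ : μ.Pairwise (· ≥ ·)) (hlen : l.length ≤ μ.length)
    (hsub : betaSet μ ⊆ l) : fromBeta l = μ.filter (· ≠ 0) := by
  refine fromBeta_of_perm hμ (List.Subperm.perm_of_length_le ?_ ?_).symm
  · exact List.subperm_of_subset ((pairwise_gt_betaSet hμ).imp ne_of_gt) hsub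
  · rwa [length_betaSet]

theorem fromBeta_eq_hook {L : List ℕ} {c l : ℕ} (hc : 0 < c) (hlen : L.length ≤ l + 1)
    (hsub : betaSet (c :: List.replicate l 1) ⊆ L) : fromBeta L = c :: List.replicate l 1 := by
  rw [fromBeta_of_subset (by simp [List.pairwise_replicate]; omega) (by simpa using hlen) hsub,
    List.filter_cons_of_pos (by simp; omega), List.filter_replicate_of_pos (by simp)]

theorem fromBeta_eq_row {L : List ℕ} {c l : ℕ} (hc : 0 < c) (hlen : L.length ≤ l + 1)
    (hsub : betaSet (c :: List.replicate l 0) ⊆ L) : fromBeta L = [c] := by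
  rw [fromBeta_of_subset (by simp [List.pairwise_replicate]) (by simpa using hlen) hsub,
    List.filter_cons_of_pos (by simp; omega), List.filter_replicate_of_neg (by simp)]

def rimHookTerm (B : List ℕ) (q : ℕ) (γ : List ℕ) (x : ℕ) : ℤ :=
  if q ≤ x ∧ x - q ∉ B then
    (-1) ^ (B.filter (fun y => x - q < y ∧ y < x)).length * MN (fromBeta ((x - q) :: B.erase x)) γ
  else 0

theorem MN_cons (β γ : List ℕ) (q : ℕ) :
    MN β (q :: γ) = ((betaSet β).map (rimHookTerm (betaSet β) q γ)).sum := by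
  rw [MN]; rfl

theorem rimHookTerm_of_lt {B γ : List ℕ} {q x : ℕ} (h : x < q) : rimHookTerm B q γ x = 0 :=
  if_neg fun h' => by omega

theorem rimHookTerm_of_mem {B γ : List ℕ} {q x : ℕ} (h : x - q ∈ B) : rimHookTerm B q γ x = 0 :=
  if_neg fun h' => h'.2 h

theorem rimHookTerm_of_not_mem {B γ : List ℕ} {q x : ℕ} (hq : q ≤ x) (h : x - q ∉ B) :
    rimHookTerm B q γ x =
      (-1) ^ (B.filter (fun y => x - q < y ∧ y < x)).length *
        MN (fromBeta ((x - q) :: B.erase x)) γ :=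
  if_pos ⟨hq, h⟩

theorem sum_rimHookTerm_betaSet_replicate_one {B γ : List ℕ} {k q : ℕ} (hk : k < q) :
    ((betaSet (List.replicate k 1)).map (rimHookTerm B q γ)).sum = 0 :=
  List.sum_eq_zero fun _ hz => by
    obtain ⟨x, hx, rfl⟩ := List.mem_map.1 hz
    exact rimHookTerm_of_lt (by have := mem_betaSet_replicate.1 hx; omega)

theorem MN_singleton_cons_self {n : ℕ} (hn : 0 < n) (γ : List ℕ) : MN [n] (n :: γ) = MN [] γ := by
  rw [MN_cons, betaSet_cons, betaSet_nil, List.map_singleton, List.sum_singleton, List.length_nil,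
    Nat.add_zero, rimHookTerm_of_not_mem le_rfl (by simp; omega), Nat.sub_self,
    List.erase_cons_head, List.filter_cons_of_neg (by simp), List.filter_nil, List.length_nil,
    pow_zero, one_mul]
  rfl

theorem MN_hook_arm {m l q : ℕ} (hlq : l < q) (hqm : q < m) (γ : List ℕ) :
    MN (m :: List.replicate l 1) (q :: γ) = MN ((m - q) :: List.replicate l 1) γ := by
  rw [MN_cons, betaSet_cons, List.length_replicate, List.map_cons, List.sum_cons,
    sum_rimHookTerm_betaSet_replicate_one hlq, add_zero,
    rimHookTerm_of_not_mem (x := m + l) (by omega)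
      (by simp only [List.mem_cons, mem_betaSet_replicate]; omega),
    List.erase_cons_head, List.filter_cons_of_neg (by simp),
    List.filter_eq_nil_iff.2 (fun z hz => by have := mem_betaSet_replicate.1 hz; simp; omega),
    fromBeta_eq_hook (c := m - q) (l := l) (by omega) (by simp [length_betaSet]) (fun z hz => by
      simp only [betaSet_cons, List.length_replicate, List.mem_cons, mem_betaSet_replicate] at hz ⊢
      omega)]
  simp

theorem MN_hook_leg {m l : ℕ} (hm : 0 < m) (hml : m ≤ l) (γ : List ℕ) :
    MN (m :: List.replicate l 1) (l :: γ) = (-1) ^ (l - 1) * MN [m] γ := by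
  obtain ⟨n, rfl⟩ : ∃ n, l = n + 1 := ⟨l - 1, by omega⟩
  set B := (m + (n + 1)) :: (1 + n) :: betaSet (List.replicate n 1) with hB
  have blocked : rimHookTerm B (n + 1) γ (m + (n + 1)) = 0 :=
    rimHookTerm_of_mem (by simp only [hB, List.mem_cons, mem_betaSet_replicate]; omega)
  have to_row : rimHookTerm B (n + 1) γ (1 + n) = (-1) ^ n * MN [m] γ := by
    rw [rimHookTerm_of_not_mem (by omega)
        (by simp only [hB, List.mem_cons, mem_betaSet_replicate]; omega),
      List.erase_cons_tail (by simp; omega), List.erase_cons_head,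
      List.filter_cons_of_neg (by simp; omega), List.filter_cons_of_neg (by simp),
      List.filter_eq_self.2 (fun z hz => by have := mem_betaSet_replicate.1 hz; simp; omega),
      length_betaSet, List.length_replicate,
      fromBeta_eq_row (l := n + 1) hm (by simp [length_betaSet]) (fun z hz => by
        simp only [betaSet_cons, List.length_replicate, List.mem_cons,
          mem_betaSet_replicate] at hz ⊢
        omega)]
  rw [Nat.add_sub_cancel, MN_cons, betaSet_cons, List.length_replicate, List.replicate_succ,
    betaSet_cons, List.length_replicate, ← hB, List.map_cons, List.map_cons, List.sum_cons,
    List.sum_cons, blocked, to_row, sum_rimHookTerm_betaSet_replicate_one (by omega), zero_add,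
    add_zero]

theorem MN_singleton_of_sum_eq {γ : List ℕ} {n : ℕ} (hn : 0 < n) (hγ : ∀ q ∈ γ, 0 < q)
    (hsum : γ.sum = n) : MN [n] γ = 1 := by
  induction γ generalizing n with
  | nil => simp at hsum; omega
  | cons q γ ih =>
    simp only [List.mem_cons, forall_eq_or_imp, List.sum_cons] at hγ hsum
    subst hsum
    cases γ with
    | nil => exact (MN_singleton_cons_self hγ.1 []).trans rfl
    | cons r γ =>
      have hr := hγ.2 r List.mem_cons_self
      have h := MN_hook_arm (l := 0) hγ.1 (show q < q + (r :: γ).sum by simp; omega) (r :: γ)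
      rw [List.replicate_zero, add_tsub_cancel_left] at h
      rw [h]
      exact ih (by simp; omega) hγ.2 rfl

theorem MN_first_row {x y k : ℕ} (hy : 2 ≤ y) (hx : x = y + k) (γ : List ℕ) :
    MN (x :: y :: List.replicate k 1) (x :: γ) =
      -MN ((y - 1) :: List.replicate (k + 1) 1) γ + (-1) ^ k * MN [x] γ := by
  subst hx
  set B := (y + k + (k + 1)) :: (y + k) :: betaSet (List.replicate k 1) with hB
  have to_hook : rimHookTerm B (y + k) γ (y + k + (k + 1)) =
      -MN ((y - 1) :: List.replicate (k + 1) 1) γ := by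
    rw [rimHookTerm_of_not_mem (by omega)
        (by simp only [hB, List.mem_cons, mem_betaSet_replicate]; omega),
      List.erase_cons_head, List.filter_cons_of_neg (by simp),
      List.filter_cons_of_pos (by simp; omega),
      List.filter_eq_nil_iff.2 (fun z hz => by have := mem_betaSet_replicate.1 hz; simp; omega),
      fromBeta_eq_hook (c := y - 1) (l := k + 1) (by omega) (by simp [length_betaSet])
        (fun z hz => by
          simp only [betaSet_cons, List.length_replicate, List.mem_cons,
            mem_betaSet_replicate] at hz ⊢
          omega)]
    simp
  have to_row : rimHookTerm B (y + k) γ (y + k) = (-1) ^ k * MN [y + k] γ := by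
    rw [rimHookTerm_of_not_mem le_rfl
        (by simp only [hB, List.mem_cons, mem_betaSet_replicate]; omega),
      List.erase_cons_tail (by simp), List.erase_cons_head,
      List.filter_cons_of_neg (by simp), List.filter_cons_of_neg (by simp),
      List.filter_eq_self.2 (fun z hz => by have := mem_betaSet_replicate.1 hz; simp; omega),
      length_betaSet, List.length_replicate,
      fromBeta_eq_row (c := y + k) (l := k + 1) (by omega) (by simp [length_betaSet])
        (fun z hz => by
          simp only [betaSet_cons, List.length_replicate, List.mem_cons,
            mem_betaSet_replicate] at hz ⊢
          omega)]
  rw [MN_cons, betaSet_cons, betaSet_cons, List.length_cons, List.length_replicate, ← hB,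
    List.map_cons, List.map_cons, List.sum_cons, List.sum_cons, to_hook, to_row,
    sum_rimHookTerm_betaSet_replicate_one (by omega), add_zero]

/-- For `b + 2 ≤ a ≤ 2b`, the irreducible characters of `S_{2a}` indexed by
`(a, b+2, 1^{a-b-2})` and by `(a, a-b+1, 1^{b-1})` both vanish at the class
of cycle type `(a, b, a-b-1, 1)`. -/
theorem stmt_16 (a b : ℕ) (h1 : b + 2 ≤ a) (h2 : a ≤ 2 * b) :
    MN (a :: (b + 2) :: List.replicate (a - b - 2) 1) [a, b, a - b - 1, 1] = 0 ∧
    MN (a :: (a - b + 1) :: List.replicate (b - 1) 1) [a, b, a - b - 1, 1] = 0 := by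
  have hrow : MN [a] [b, a - b - 1, 1] = 1 :=
    MN_singleton_of_sum_eq (by omega) (by simp; omega) (by simp; omega)
  constructor
  · rw [MN_first_row (by omega) (by omega), show a - b - 2 + 1 = a - b - 1 by omega,
      MN_hook_arm (by omega) (by omega), show b + 2 - 1 - b = 1 by omega,
      MN_hook_leg one_pos (by omega), hrow, show a - b - 1 - 1 = a - b - 2 by omega,
      MN_singleton_of_sum_eq one_pos (by simp) rfl]
    ring
  · rw [MN_first_row (by omega) (by omega), show b - 1 + 1 = b by omega,
      MN_hook_leg (by omega) (by omega), hrow,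
      MN_singleton_of_sum_eq (n := a - b + 1 - 1) (by omega) (by simp; omega) (by simp; omega)]
    ring
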